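/- For density operators ρ₀ and ρ₁ (positive semidefinite with trace 1) on a finite-dimensional complex Hilbert space, ‖ρ₀ - ρ₁‖₁ ≤ 2·√(1 - F(ρ₀,ρ₁)²), where F denotes the fidelity. -/

import Mathlib

open Matrix
open scoped ComplexOrder

open scoped Classical in
/-- The positive semidefinite square root (junk value `0` off the PSD matrices). -/
noncomputable def psdSqrt {n : Type*} [Fintype n] [DecidableEq n]
    (A : Matrix n n ℂ) : Matrix n n ℂ :=
  if h : A.PosSemidef then
    h.1.eigenvectorUnitary.1 * diagonal ((↑) ∘ (√·) ∘ h.1.eigenvalues) *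
      (star h.1.eigenvectorUnitary : Matrix n n ℂ)
  else 0

/-- The trace norm `‖A‖₁ = Tr √(AᴴA)`. -/
noncomputable def traceNorm {m n : Type*} [Fintype m] [Fintype n] [DecidableEq n]
    (A : Matrix m n ℂ) : ℝ :=
  ((psdSqrt (Aᴴ * A)).trace).re

/-- The fidelity `F(P,Q) = ‖√P √Q‖₁` of positive semidefinite operators. -/
noncomputable def fidelity {n : Type*} [Fintype n] [DecidableEq n]
    (P Q : Matrix n n ℂ) : ℝ :=
  traceNorm (psdSqrt P * psdSqrt Q)

/-!
Put `A = √ρ₀`, take the polar decomposition `A √ρ₁ = V |A √ρ₁|` and set `Y = V √ρ₁`. Then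
`AᴴA = ρ₀`, `YᴴY = ρ₁` and `Re Tr (AᴴY) = Tr |A √ρ₁| = F`. Since
`2 (AᴴA - YᴴY) = (A + Y)ᴴ (A - Y) + (A - Y)ᴴ (A + Y)`, multiplying by the unitary sign `S` of
`ρ₀ - ρ₁` (so that `(ρ₀ - ρ₁) S = |ρ₀ - ρ₁|`) and applying Cauchy–Schwarz for the Hilbert–Schmidt
inner product gives `‖ρ₀ - ρ₁‖₁ ≤ ‖A + Y‖₂ ‖A - Y‖₂ = √((2 + 2F) (2 - 2F))`.
-/

open scoped MatrixOrder

theorem LinearMap.exists_linearIsometry_comp_eq_of_norm_eq {𝕜 E : Type*} [RCLike 𝕜]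
    [NormedAddCommGroup E] [InnerProductSpace 𝕜 E] [FiniteDimensional 𝕜 E]
    {T R : E →ₗ[𝕜] E} (h : ∀ x, ‖T x‖ = ‖R x‖) : ∃ V : E →ₗᵢ[𝕜] E, ∀ x, V (R x) = T x := by
  have hker : LinearMap.ker R ≤ LinearMap.ker T := fun x hx => by
    rw [LinearMap.mem_ker, ← norm_eq_zero, h, norm_eq_zero]
    exact hx
  let L : LinearMap.range R →ₗ[𝕜] E :=
    (LinearMap.ker R).liftQ T hker ∘ₗ R.quotKerEquivRange.symm.toLinearMap
  have hL : ∀ x, L ⟨R x, LinearMap.mem_range_self R x⟩ = T x := fun x => by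
    simp [L, LinearMap.quotKerEquivRange_symm_apply_image]
  let L' : LinearMap.range R →ₗᵢ[𝕜] E :=
    { toLinearMap := L
      norm_map' := by
        rintro ⟨_, x, rfl⟩
        rw [hL, h]
        rfl }
  exact ⟨L'.extend, fun x => (L'.extend_apply ⟨R x, _⟩).trans (hL x)⟩

namespace Matrix

variable {n 𝕜 : Type*} [Fintype n] [DecidableEq n] [RCLike 𝕜]

theorem exists_mul_eq_of_conjTranspose_mul_self_eq {M N : Matrix n n 𝕜}
    (h : Mᴴ * M = Nᴴ * N) : ∃ V : Matrix n n 𝕜, Vᴴ * V = 1 ∧ M = V * N := by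
  have hnorm : ∀ x, ‖toEuclideanLin M x‖ = ‖toEuclideanLin N x‖ := fun x => by
    change ‖toEuclideanCLM (𝕜 := 𝕜) M x‖ = ‖toEuclideanCLM (𝕜 := 𝕜) N x‖
    simp only [ContinuousLinearMap.apply_norm_eq_sqrt_inner_adjoint_left,
      ← ContinuousLinearMap.star_eq_adjoint, ← map_star, ← ContinuousLinearMap.mul_def, ← map_mul,
      star_eq_conjTranspose, h]
  obtain ⟨V, hV⟩ := LinearMap.exists_linearIsometry_comp_eq_of_norm_eq hnorm
  obtain ⟨W, hW⟩ :=
    EquivLike.surjective (toEuclideanCLM (n := n) (𝕜 := 𝕜)) V.toContinuousLinearMap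
  refine ⟨W, EquivLike.injective (toEuclideanCLM (n := n) (𝕜 := 𝕜)) ?_,
    EquivLike.injective (toEuclideanCLM (n := n) (𝕜 := 𝕜)) ?_⟩
  · rw [map_mul, ← star_eq_conjTranspose, map_star, hW, map_one,
      ContinuousLinearMap.star_eq_adjoint]
    exact LinearIsometry.adjoint_comp_self V
  · rw [map_mul, hW]
    ext1 x
    exact (hV x).symm

theorem re_trace_conjTranspose_mul_le (X Y : Matrix n n 𝕜) :
    RCLike.re (Xᴴ * Y).trace ≤
      √(RCLike.re (Xᴴ * X).trace) * √(RCLike.re (Yᴴ * Y).trace) := by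
  let _ := toMatrixSeminormedAddCommGroup (1 : Matrix n n 𝕜) PosSemidef.one
  let _ := toMatrixInnerProductSpace (1 : Matrix n n 𝕜) PosSemidef.one
  have hinner : ∀ A B : Matrix n n 𝕜, (inner 𝕜 A B : 𝕜) = (Aᴴ * B).trace := fun A B => by
    change (B * 1 * Aᴴ).trace = _
    rw [mul_one, trace_mul_comm]
  simpa only [norm_eq_sqrt_re_inner (𝕜 := 𝕜), hinner] using re_inner_le_norm (𝕜 := 𝕜) X Y

theorem IsHermitian.exists_mul_eq_abs {A : Matrix n n 𝕜} (hA : A.IsHermitian) :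
    ∃ S : Matrix n n 𝕜, S * Sᴴ = 1 ∧ A * S = CFC.abs A := by
  have hsa : IsSelfAdjoint A := hA
  let sgn : ℝ → ℝ := fun x => if 0 ≤ x then 1 else -1
  have hcont : ContinuousOn sgn (spectrum ℝ A) := (spectrum ℝ A).toFinite.continuousOn sgn
  refine ⟨cfc sgn A, ?_, ?_⟩
  · rw [← star_eq_conjTranspose, ← cfc_star, ← cfc_mul sgn _ A, ← cfc_one ℝ A]
    refine cfc_congr fun x _ => ?_
    by_cases hx : 0 ≤ x <;> simp [sgn, hx]
  · nth_rw 1 [← cfc_id' ℝ A]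
    rw [← cfc_mul _ _ A, CFC.abs_eq_cfc_norm A]
    refine cfc_congr fun x _ => ?_
    by_cases hx : 0 ≤ x <;> simp [sgn, hx, abs_of_nonneg, abs_of_neg, not_le.mp]

end Matrix

section

variable {n : Type*} [Fintype n] [DecidableEq n]

theorem psdSqrt_eq_sqrt {A : Matrix n n ℂ} (hA : A.PosSemidef) : psdSqrt A = CFC.sqrt A := by
  rw [psdSqrt, dif_pos hA, CFC.sqrt_eq_cfc, cfc_nnreal_eq_real _ A, hA.1.cfc_eq, IsHermitian.cfc,
    Unitary.conjStarAlgAut_apply]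
  congr 3
  funext i
  simp [hA.eigenvalues_nonneg i]

theorem traceNorm_eq_re_trace_abs (A : Matrix n n ℂ) : traceNorm A = (CFC.abs A).trace.re := by
  rw [traceNorm, psdSqrt_eq_sqrt (posSemidef_conjTranspose_mul_self A)]
  rfl

theorem traceNorm_conjTranspose_mul_self_sub_le (X Y : Matrix n n ℂ) :
    traceNorm (Xᴴ * X - Yᴴ * Y) ≤
      √(((Xᴴ * X).trace.re + (Yᴴ * Y).trace.re) ^ 2 - (2 * (Xᴴ * Y).trace.re) ^ 2) := by
  obtain ⟨S, hS, hΔS⟩ := ((isHermitian_conjTranspose_mul_self X).sub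
    (isHermitian_conjTranspose_mul_self Y)).exists_mul_eq_abs
  have hS_isometric : ∀ Z : Matrix n n ℂ, ((Z * S)ᴴ * (Z * S)).trace = (Zᴴ * Z).trace := fun Z => by
    rw [conjTranspose_mul, mul_assoc, trace_mul_comm, mul_assoc, mul_assoc Z, hS, mul_one,
      trace_mul_comm]
  have hYX : (Yᴴ * X).trace.re = (Xᴴ * Y).trace.re := by
    rw [← conjTranspose_conjTranspose X, ← conjTranspose_mul, trace_conjTranspose,
      conjTranspose_conjTranspose]
    exact Complex.conj_re _
  have hP : ((X + Y)ᴴ * (X + Y)).trace.re =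
      (Xᴴ * X).trace.re + (Yᴴ * Y).trace.re + 2 * (Xᴴ * Y).trace.re := by
    simp only [conjTranspose_add, add_mul, mul_add, trace_add, Complex.add_re, hYX]
    ring
  have hQ : ((X - Y)ᴴ * (X - Y)).trace.re =
      (Xᴴ * X).trace.re + (Yᴴ * Y).trace.re - 2 * (Xᴴ * Y).trace.re := by
    simp only [conjTranspose_sub, sub_mul, mul_sub, trace_sub, Complex.sub_re, hYX]
    ring
  have hP_nonneg : 0 ≤ ((X + Y)ᴴ * (X + Y)).trace.re :=
    (Complex.nonneg_iff.mp (posSemidef_conjTranspose_mul_self _).trace_nonneg).1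
  have h2 : 2 * traceNorm (Xᴴ * X - Yᴴ * Y) =
      ((X + Y)ᴴ * ((X - Y) * S)).trace.re + ((X - Y)ᴴ * ((X + Y) * S)).trace.re := by
    have hdecomp : (X + Y)ᴴ * (X - Y) + (X - Y)ᴴ * (X + Y) = (2 : ℝ) • (Xᴴ * X - Yᴴ * Y) := by
      rw [conjTranspose_add, conjTranspose_sub, two_smul]
      noncomm_ring
    rw [traceNorm_eq_re_trace_abs, ← hΔS, ← Complex.add_re, ← trace_add, ← mul_assoc, ← mul_assoc,
      ← add_mul, hdecomp, smul_mul_assoc, trace_smul, Complex.smul_re, smul_eq_mul]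
  have cs₁ : ((X + Y)ᴴ * ((X - Y) * S)).trace.re ≤
      √(((X + Y)ᴴ * (X + Y)).trace.re) * √(((X - Y)ᴴ * (X - Y)).trace.re) := by
    simpa only [hS_isometric, RCLike.re_to_complex] using
      re_trace_conjTranspose_mul_le (X + Y) ((X - Y) * S)
  have cs₂ : ((X - Y)ᴴ * ((X + Y) * S)).trace.re ≤
      √(((X - Y)ᴴ * (X - Y)).trace.re) * √(((X + Y)ᴴ * (X + Y)).trace.re) := by
    simpa only [hS_isometric, RCLike.re_to_complex] using
      re_trace_conjTranspose_mul_le (X - Y) ((X + Y) * S)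
  calc traceNorm (Xᴴ * X - Yᴴ * Y)
      ≤ √(((X + Y)ᴴ * (X + Y)).trace.re) * √(((X - Y)ᴴ * (X - Y)).trace.re) := by
        linarith [mul_comm √(((X + Y)ᴴ * (X + Y)).trace.re) √(((X - Y)ᴴ * (X - Y)).trace.re)]
    _ = _ := by rw [← Real.sqrt_mul hP_nonneg, hP, hQ]; ring_nf

theorem exists_conjTranspose_mul_self_eq_and_re_trace_eq_fidelity {ρ₀ ρ₁ : Matrix n n ℂ}
    (h₀ : ρ₀.PosSemidef) (h₁ : ρ₁.PosSemidef) :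
    ∃ Y : Matrix n n ℂ, Yᴴ * Y = ρ₁ ∧ ((psdSqrt ρ₀)ᴴ * Y).trace.re = fidelity ρ₀ ρ₁ := by
  rw [fidelity, traceNorm_eq_re_trace_abs, psdSqrt_eq_sqrt h₀, psdSqrt_eq_sqrt h₁]
  set A := CFC.sqrt ρ₀
  set B := CFC.sqrt ρ₁
  have hA : Aᴴ = A := (CFC.sqrt_nonneg ρ₀).isSelfAdjoint
  have hB : Bᴴ = B := (CFC.sqrt_nonneg ρ₁).isSelfAdjoint
  have habs : (CFC.abs (A * B))ᴴ = CFC.abs (A * B) := (CFC.abs_nonneg (A * B)).isSelfAdjoint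
  obtain ⟨V, hV, hpolar⟩ := exists_mul_eq_of_conjTranspose_mul_self_eq (M := A * B)
    (by rw [habs]; exact (CFC.abs_mul_abs (A * B)).symm)
  refine ⟨V * B, ?_, ?_⟩
  · rw [conjTranspose_mul, mul_assoc, ← mul_assoc Vᴴ, hV, one_mul, hB]
    exact CFC.sqrt_mul_sqrt_self ρ₁ h₁.nonneg
  · have hpolar' : (A * B)ᴴ * V = CFC.abs (A * B) := by
      conv_lhs => rw [hpolar, conjTranspose_mul, mul_assoc, hV, mul_one, habs]
    rw [hA, ← mul_assoc, trace_mul_comm, ← mul_assoc, ← hpolar', conjTranspose_mul, hA, hB]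

end

/-- **Fuchs–van de Graaf.** For density operators `ρ₀, ρ₁` on a finite-dimensional
complex Hilbert space, `‖ρ₀ - ρ₁‖₁ ≤ 2·√(1 - F(ρ₀,ρ₁)²)`. -/
theorem traceNorm_sub_le_fuchs_van_de_graaf
    {W : Type*} [Fintype W] [DecidableEq W] (ρ₀ ρ₁ : Matrix W W ℂ)
    (h₀ : ρ₀.PosSemidef) (h₁ : ρ₁.PosSemidef)
    (t₀ : ρ₀.trace = 1) (t₁ : ρ₁.trace = 1) :
    traceNorm (ρ₀ - ρ₁) ≤ 2 * Real.sqrt (1 - fidelity ρ₀ ρ₁ ^ 2) := by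
  obtain ⟨Y, hY, hF⟩ := exists_conjTranspose_mul_self_eq_and_re_trace_eq_fidelity h₀ h₁
  have hA : (psdSqrt ρ₀)ᴴ * psdSqrt ρ₀ = ρ₀ := by
    rw [psdSqrt_eq_sqrt h₀, ← star_eq_conjTranspose, (CFC.sqrt_nonneg ρ₀).isSelfAdjoint.star_eq]
    exact CFC.sqrt_mul_sqrt_self ρ₀ h₀.nonneg
  calc traceNorm (ρ₀ - ρ₁)
      ≤ √((ρ₀.trace.re + ρ₁.trace.re) ^ 2 - (2 * fidelity ρ₀ ρ₁) ^ 2) := by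
        simpa only [hA, hY, hF] using traceNorm_conjTranspose_mul_self_sub_le (psdSqrt ρ₀) Y
    _ = 2 * √(1 - fidelity ρ₀ ρ₁ ^ 2) := by
        rw [t₀, t₁, Complex.one_re, show ((1 : ℝ) + 1) ^ 2 - (2 * fidelity ρ₀ ρ₁) ^ 2 =
          2 ^ 2 * (1 - fidelity ρ₀ ρ₁ ^ 2) by ring, Real.sqrt_mul (by norm_num),
          Real.sqrt_sq zero_le_two]
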